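/- Let S be a finite set with |S| = k ≥ 3 and c ≥ 0 a real number. Then ρ̄_c is a t-monotone submodular function on 2^{S^±} and its base polyhedron B(ρ̄_c) equals B̄_c. -/
import Mathlib


open Finset

/-- Submodularity of a real-valued set function (with `ρ ∅ = 0`). -/
def SubmodularR {A : Type*} [DecidableEq A] (ρ : Finset A → ℝ) : Prop :=
  ρ ∅ = 0 ∧ ∀ X Y : Finset A, ρ (X ∩ Y) + ρ (X ∪ Y) ≤ ρ X + ρ Y

/-- `X̲`: remove from `X ⊆ S^±` all pairs `{i⁺, i⁻} ⊆ X`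
(where `S^± = S × Bool`, `true` = `+`). -/
def reduceSigned {S : Type*} [DecidableEq S] (X : Finset (S × Bool)) :
    Finset (S × Bool) :=
  X.filter (fun p => ¬((p.1, true) ∈ X ∧ (p.1, false) ∈ X))

/-- t-monotonicity: `ρ(X̲) ≤ ρ(X)` for all `X ⊆ S^±`. -/
def TMonoR {S : Type*} [DecidableEq S] (ρ : Finset (S × Bool) → ℝ) : Prop :=
  ∀ X : Finset (S × Bool), ρ (reduceSigned X) ≤ ρ X

/-- Membership in the base polyhedron `B(ρ)` of a real-valued set function. -/
def InBaseR {A : Type*} [Fintype A] (ρ : Finset A → ℝ) (x : A → ℝ) : Prop :=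
  (∑ p, x p) = ρ univ ∧ ∀ X : Finset A, (∑ p ∈ X, x p) ≤ ρ X


/-- The lift `B̄_c ⊆ ℝ^{S^±}` of the tight node-flowing polytope. -/
def liftedTightNodeFlowing (S : Type*) [Fintype S] [DecidableEq S] (c : ℝ) :
    Set (S × Bool → ℝ) :=
  {x | (∑ p : S × Bool, x p) = 0 ∧
    (∑ i : S, x (i, true)) ≤ 2 * c ∧
    (∑ i : S, x (i, false)) ≤ -(2 * c) ∧
    (∀ i : S, x (i, true) + ∑ j ∈ univ.erase i, x (j, false) ≤ 0) ∧
    (∀ i : S, 0 ≤ x (i, true) ∧ x (i, true) ≤ c) ∧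
    (∀ i : S, -c ≤ x (i, false) ∧ x (i, false) ≤ 0)}

/-- The submodular function `ρ̄_c` describing `B̄_c`:
`ρ̄_c(X) = c·(min{|X⁺|, 2} + min{k − 2 − |X⁻|, 0})` (computed in `ℤ`). -/
noncomputable def rhoTNF (S : Type*) [Fintype S] [DecidableEq S] (c : ℝ)
    (X : Finset (S × Bool)) : ℝ :=
  c * ((min ((X.filter (fun p => p.2 = true)).card : ℤ) 2 +
    min ((Fintype.card S : ℤ) - 2 - ((X.filter (fun p => p.2 = false)).card : ℤ)) 0 : ℤ) : ℝ)

section Aux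
variable {S : Type*} [Fintype S] [DecidableEq S]

/-- The image in `S` of the component of `X` with sign `b`. -/
def secPart (X : Finset (S × Bool)) (b : Bool) : Finset S :=
  (X.filter (fun p => p.2 = b)).image Prod.fst

lemma mem_secPart {X : Finset (S × Bool)} {b : Bool} {i : S} :
    i ∈ secPart X b ↔ (i, b) ∈ X := by
  unfold secPart
  simp only [Finset.mem_image, Finset.mem_filter]
  constructor
  · rintro ⟨⟨j, b'⟩, ⟨hX, hb⟩, rfl⟩
    simp only at hb
    subst hb; exact hX
  · intro h; exact ⟨(i, b), ⟨h, rfl⟩, rfl⟩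

lemma filter_eq_image (X : Finset (S × Bool)) (b : Bool) :
    X.filter (fun p => p.2 = b) = (secPart X b).image (fun i => (i, b)) := by
  ext ⟨i, b'⟩
  simp only [Finset.mem_filter, Finset.mem_image, Prod.mk.injEq]
  constructor
  · rintro ⟨hX, rfl⟩; exact ⟨i, mem_secPart.mpr hX, rfl, rfl⟩
  · rintro ⟨j, hj, rfl, rfl⟩; exact ⟨mem_secPart.mp hj, rfl⟩

lemma card_filter_eq (X : Finset (S × Bool)) (b : Bool) :
    (X.filter (fun p => p.2 = b)).card = (secPart X b).card := by
  rw [filter_eq_image, Finset.card_image_of_injective]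
  intro a₁ a₂ h
  exact (Prod.mk.injEq _ _ _ _).mp h |>.1

lemma sum_filter_eq (X : Finset (S × Bool)) (b : Bool) (x : S × Bool → ℝ) :
    ∑ p ∈ X.filter (fun p => p.2 = b), x p = ∑ i ∈ secPart X b, x (i, b) := by
  rw [filter_eq_image, Finset.sum_image]
  intro a₁ _ a₂ _ h
  exact (Prod.mk.injEq _ _ _ _).mp h |>.1

lemma sum_split (X : Finset (S × Bool)) (x : S × Bool → ℝ) :
    ∑ p ∈ X, x p = ∑ i ∈ secPart X true, x (i, true) + ∑ i ∈ secPart X false, x (i, false) := by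
  rw [← sum_filter_eq, ← sum_filter_eq, ← Finset.sum_filter_add_sum_filter_not X (fun p => p.2 = true)]
  congr 1
  apply Finset.sum_congr _ (fun _ _ => rfl)
  apply Finset.filter_congr
  intro p _
  simp

lemma secPart_univ (b : Bool) : secPart (univ : Finset (S × Bool)) b = univ := by
  ext i; simp [mem_secPart]

lemma secPart_image (A : Finset S) (b b' : Bool) :
    secPart (A.image (fun i => (i, b))) b' = if b' = b then A else ∅ := by
  ext i
  simp only [mem_secPart, Finset.mem_image, Prod.mk.injEq]
  by_cases h : b' = b <;> simp [h] <;> aesop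

lemma secPart_erase_univ (i : S) (b b' : Bool) :
    secPart ((univ : Finset (S × Bool)).erase (i, b)) b' =
      if b' = b then univ.erase i else univ := by
  ext j
  simp only [mem_secPart, Finset.mem_erase, Finset.mem_univ, and_true, Prod.mk.injEq, ne_eq,
    not_and]
  by_cases h : b' = b <;> simp [h] <;> aesop

lemma secPart_reduce (X : Finset (S × Bool)) :
    secPart (reduceSigned X) true = secPart X true \ secPart X false ∧
    secPart (reduceSigned X) false = secPart X false \ secPart X true := by
  constructor <;>
  · ext i
    simp only [mem_secPart, reduceSigned, Finset.mem_filter, Finset.mem_sdiff]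
    tauto

lemma rho_eval (c : ℝ) (X : Finset (S × Bool)) :
    rhoTNF S c X = c * ((min ((secPart X true).card : ℤ) 2 +
      min ((Fintype.card S : ℤ) - 2 - ((secPart X false).card : ℤ)) 0 : ℤ) : ℝ) := by
  simp only [rhoTNF, card_filter_eq]

lemma sum_true_le {c : ℝ} (hc : 0 ≤ c) (x : S × Bool → ℝ)
    (hx : ∀ i : S, 0 ≤ x (i, true) ∧ x (i, true) ≤ c)
    (hs : (∑ i : S, x (i, true)) ≤ 2 * c) (A : Finset S) :
    ∑ i ∈ A, x (i, true) ≤ c * ((min (A.card : ℤ) 2 : ℤ) : ℝ) := by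
  rcases le_or_gt A.card 2 with h | h
  · have hmin : min ((A.card : ℤ)) 2 = (A.card : ℤ) := by omega
    rw [hmin]
    push_cast
    calc ∑ i ∈ A, x (i, true) ≤ ∑ _i ∈ A, c := Finset.sum_le_sum fun i _ => (hx i).2
      _ = (A.card : ℝ) * c := by rw [Finset.sum_const, nsmul_eq_mul]
      _ = c * (A.card : ℝ) := mul_comm _ _
  · have hmin : min ((A.card : ℤ)) 2 = 2 := by omega
    rw [hmin]
    push_cast
    calc ∑ i ∈ A, x (i, true) ≤ ∑ i : S, x (i, true) :=
          Finset.sum_le_sum_of_subset_of_nonneg (Finset.subset_univ A)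
            (fun i _ _ => (hx i).1)
      _ ≤ 2 * c := hs
      _ = c * 2 := mul_comm _ _

lemma sum_false_le {c : ℝ} (hc : 0 ≤ c) (x : S × Bool → ℝ)
    (hx : ∀ i : S, -c ≤ x (i, false) ∧ x (i, false) ≤ 0)
    (hs : (∑ i : S, x (i, false)) ≤ -(2 * c)) (B : Finset S) :
    ∑ i ∈ B, x (i, false) ≤
      c * ((min ((Fintype.card S : ℤ) - 2 - (B.card : ℤ)) 0 : ℤ) : ℝ) := by
  have hBcard : B.card ≤ Fintype.card S := Finset.card_le_univ B
  rcases le_or_gt (B.card + 2) (Fintype.card S) with h | h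
  · have hmin : min ((Fintype.card S : ℤ) - 2 - (B.card : ℤ)) 0 = 0 := by omega
    rw [hmin]
    simpa using Finset.sum_nonpos (fun i _ => (hx i).2)
  · have hmin : min ((Fintype.card S : ℤ) - 2 - (B.card : ℤ)) 0
        = (Fintype.card S : ℤ) - 2 - (B.card : ℤ) := by omega
    rw [hmin]
    have hsplit : ∑ i ∈ univ \ B, x (i, false) + ∑ i ∈ B, x (i, false)
        = ∑ i : S, x (i, false) := Finset.sum_sdiff (Finset.subset_univ B)
    have hcard : ((univ \ B).card : ℝ) = (Fintype.card S : ℝ) - (B.card : ℝ) := by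
      rw [Finset.card_sdiff_of_subset (Finset.subset_univ B), Finset.card_univ, Nat.cast_sub hBcard]
    have hlow : ((univ \ B).card : ℝ) * (-c) ≤ ∑ i ∈ univ \ B, x (i, false) := by
      have := Finset.card_nsmul_le_sum (univ \ B) (fun i => x (i, false)) (-c)
        (fun i _ => (hx i).1)
      simpa [nsmul_eq_mul] using this
    rw [hcard] at hlow
    push_cast
    nlinarith [hlow, hsplit, hs]

end Aux

/-- **`ρ̄_c` is a t-monotone submodular function with base polyhedron `B̄_c`.** -/
theorem rhoTNF_tmono_submodular_base (S : Type*) [Fintype S] [DecidableEq S]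
    (hk : 3 ≤ Fintype.card S) (c : ℝ) (hc : 0 ≤ c) :
    SubmodularR (rhoTNF S c) ∧ TMonoR (rhoTNF S c) ∧
      {x : S × Bool → ℝ | InBaseR (rhoTNF S c) x} = liftedTightNodeFlowing S c := by
  have hrho_univ : rhoTNF S c univ = 0 := by
    rw [rho_eval, secPart_univ, secPart_univ, Finset.card_univ]
    have : (min ((Fintype.card S : ℤ)) 2 +
        min ((Fintype.card S : ℤ) - 2 - (Fintype.card S : ℤ)) 0 : ℤ) = 0 := by omega
    rw [this]
    simp
  refine ⟨⟨?_, ?_⟩, ?_, ?_⟩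
  · -- ρ ∅ = 0
    have h0 : secPart (∅ : Finset (S × Bool)) true = ∅ := by ext i; simp [mem_secPart]
    have h0' : secPart (∅ : Finset (S × Bool)) false = ∅ := by ext i; simp [mem_secPart]
    rw [rho_eval, h0, h0', Finset.card_empty]
    have : (min ((0 : ℕ) : ℤ) 2 + min ((Fintype.card S : ℤ) - 2 - ((0:ℕ) : ℤ)) 0 : ℤ) = 0 := by
      omega
    rw [this]
    simp
  · -- submodular inequality
    intro X Y
    rw [rho_eval, rho_eval, rho_eval, rho_eval]
    have e1 : ∀ b, (secPart (X ∩ Y) b).card + (secPart (X ∪ Y) b).card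
        = (secPart X b).card + (secPart Y b).card := by
      intro b
      rw [← card_filter_eq, ← card_filter_eq, ← card_filter_eq, ← card_filter_eq,
        Finset.filter_inter_distrib, Finset.filter_union, Finset.card_inter_add_card_union]
    have e2 : ∀ b, (secPart (X ∩ Y) b).card ≤ (secPart X b).card := by
      intro b
      rw [← card_filter_eq, ← card_filter_eq]
      exact Finset.card_le_card (Finset.filter_subset_filter _ Finset.inter_subset_left)
    have e3 : ∀ b, (secPart (X ∩ Y) b).card ≤ (secPart Y b).card := by
      intro b
      rw [← card_filter_eq, ← card_filter_eq]
      exact Finset.card_le_card (Finset.filter_subset_filter _ Finset.inter_subset_right)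
    have key : (min ((secPart (X ∩ Y) true).card : ℤ) 2 +
        min ((Fintype.card S : ℤ) - 2 - ((secPart (X ∩ Y) false).card : ℤ)) 0) +
        (min ((secPart (X ∪ Y) true).card : ℤ) 2 +
        min ((Fintype.card S : ℤ) - 2 - ((secPart (X ∪ Y) false).card : ℤ)) 0) ≤
        (min ((secPart X true).card : ℤ) 2 +
        min ((Fintype.card S : ℤ) - 2 - ((secPart X false).card : ℤ)) 0) +
        (min ((secPart Y true).card : ℤ) 2 +
        min ((Fintype.card S : ℤ) - 2 - ((secPart Y false).card : ℤ)) 0) := by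
      have h1 := e1 true; have h2 := e1 false
      have h3 := e2 true; have h4 := e2 false
      have h5 := e3 true; have h6 := e3 false
      omega
    rw [← mul_add, ← mul_add, ← Int.cast_add, ← Int.cast_add]
    exact mul_le_mul_of_nonneg_left (Int.cast_le.mpr key) hc
  · -- t-monotone
    intro X
    obtain ⟨ht, hf⟩ := secPart_reduce X
    rw [rho_eval, rho_eval, ht, hf]
    have h1 : (secPart X true \ secPart X false).card + (secPart X true ∩ secPart X false).card
        = (secPart X true).card := Finset.card_sdiff_add_card_inter _ _
    have h2 : (secPart X false \ secPart X true).card + (secPart X true ∩ secPart X false).card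
        = (secPart X false).card := by
      rw [Finset.inter_comm]; exact Finset.card_sdiff_add_card_inter _ _
    have h3 : (secPart X true ∪ secPart X false).card + (secPart X true ∩ secPart X false).card
        = (secPart X true).card + (secPart X false).card :=
      Finset.card_union_add_card_inter _ _
    have h4 : (secPart X true ∪ secPart X false).card ≤ Fintype.card S := Finset.card_le_univ _
    have key : (min (((secPart X true \ secPart X false).card : ℤ)) 2 +
        min ((Fintype.card S : ℤ) - 2 - ((secPart X false \ secPart X true).card : ℤ)) 0) ≤
        (min ((secPart X true).card : ℤ) 2 +
        min ((Fintype.card S : ℤ) - 2 - ((secPart X false).card : ℤ)) 0) := by omega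
    exact mul_le_mul_of_nonneg_left (by exact_mod_cast key) hc
  · -- base polyhedron equality
    ext x
    simp only [Set.mem_setOf_eq, liftedTightNodeFlowing, InBaseR]
    have him : ∀ (A : Finset S) (b : Bool),
        ∑ p ∈ A.image (fun i => (i, b)), x p = ∑ i ∈ A, x (i, b) := by
      intro A b
      apply Finset.sum_image
      intro a₁ _ a₂ _ h
      exact (Prod.mk.injEq _ _ _ _).mp h |>.1
    constructor
    · rintro ⟨h1, h2⟩
      have hsum0 : (∑ p : S × Bool, x p) = 0 := by rw [h1, hrho_univ]
      have key2 : ∀ (b : Bool) (A : Finset S),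
          (∑ i ∈ A, x (i, b)) ≤ rhoTNF S c (A.image (fun i => (i, b))) := by
        intro b A; rw [← him]; exact h2 _
      have hsp : (∑ i : S, x (i, true)) ≤ 2 * c := by
        have h := key2 true univ
        rw [rho_eval,
          show secPart ((univ : Finset S).image (fun i => (i, true))) true = univ from by
            simp [secPart_image],
          show secPart ((univ : Finset S).image (fun i => (i, true))) false = ∅ from by
            simp [secPart_image],
          Finset.card_univ, Finset.card_empty] at h
        rw [show (min ((Fintype.card S : ℤ)) 2 +
            min ((Fintype.card S : ℤ) - 2 - ((0 : ℕ) : ℤ)) 0 : ℤ) = 2 from by omega] at h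
        push_cast at h
        linarith
      have hsn : (∑ i : S, x (i, false)) ≤ -(2 * c) := by
        have h := key2 false univ
        rw [rho_eval,
          show secPart ((univ : Finset S).image (fun i => (i, false))) true = ∅ from by
            simp [secPart_image],
          show secPart ((univ : Finset S).image (fun i => (i, false))) false = univ from by
            simp [secPart_image],
          Finset.card_univ, Finset.card_empty] at h
        rw [show (min (((0 : ℕ) : ℤ)) 2 +
            min ((Fintype.card S : ℤ) - 2 - (Fintype.card S : ℤ)) 0 : ℤ) = -2 from by omega] at h
        push_cast at h
        linarith
      have hple : ∀ i : S, x (i, true) ≤ c := by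
        intro i
        have h := key2 true {i}
        rw [Finset.sum_singleton, rho_eval,
          show secPart (({i} : Finset S).image (fun j => (j, true))) true = {i} from by
            ext j; simp [mem_secPart],
          show secPart (({i} : Finset S).image (fun j => (j, true))) false = ∅ from by
            ext j; simp [mem_secPart],
          Finset.card_singleton, Finset.card_empty] at h
        rw [show (min ((1 : ℕ) : ℤ) 2 +
            min ((Fintype.card S : ℤ) - 2 - ((0 : ℕ) : ℤ)) 0 : ℤ) = 1 from by omega] at h
        push_cast at h
        linarith
      have hnle : ∀ i : S, x (i, false) ≤ 0 := by
        intro i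
        have h := key2 false {i}
        rw [Finset.sum_singleton, rho_eval,
          show secPart (({i} : Finset S).image (fun j => (j, false))) true = ∅ from by
            ext j; simp [mem_secPart],
          show secPart (({i} : Finset S).image (fun j => (j, false))) false = {i} from by
            ext j; simp [mem_secPart],
          Finset.card_singleton, Finset.card_empty] at h
        rw [show (min ((0 : ℕ) : ℤ) 2 +
            min ((Fintype.card S : ℤ) - 2 - ((1 : ℕ) : ℤ)) 0 : ℤ) = 0 from by omega] at h
        push_cast at h
        linarith
      have hpge : ∀ i : S, 0 ≤ x (i, true) := by
        intro i
        have h := h2 ((univ : Finset (S × Bool)).erase (i, true))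
        rw [rho_eval,
          show secPart ((univ : Finset (S × Bool)).erase (i, true)) true = univ.erase i from by
            simp [secPart_erase_univ],
          show secPart ((univ : Finset (S × Bool)).erase (i, true)) false = univ from by
            simp [secPart_erase_univ],
          Finset.card_erase_of_mem (Finset.mem_univ i), Finset.card_univ] at h
        rw [show (min (((Fintype.card S - 1 : ℕ)) : ℤ) 2 +
            min ((Fintype.card S : ℤ) - 2 - (Fintype.card S : ℤ)) 0 : ℤ) = 0 from by omega] at h
        have hsumer : ∑ p ∈ (univ : Finset (S × Bool)).erase (i, true), x p + x (i, true)
            = ∑ p : S × Bool, x p := Finset.sum_erase_add _ _ (Finset.mem_univ _)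
        push_cast at h
        linarith
      have hnge : ∀ i : S, -c ≤ x (i, false) := by
        intro i
        have h := h2 ((univ : Finset (S × Bool)).erase (i, false))
        rw [rho_eval,
          show secPart ((univ : Finset (S × Bool)).erase (i, false)) true = univ from by
            simp [secPart_erase_univ],
          show secPart ((univ : Finset (S × Bool)).erase (i, false)) false = univ.erase i from by
            simp [secPart_erase_univ],
          Finset.card_erase_of_mem (Finset.mem_univ i), Finset.card_univ] at h
        rw [show (min (((Fintype.card S : ℕ)) : ℤ) 2 +
            min ((Fintype.card S : ℤ) - 2 - ((Fintype.card S - 1 : ℕ) : ℤ)) 0 : ℤ) = 1 from by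
            omega] at h
        have hsumer : ∑ p ∈ (univ : Finset (S × Bool)).erase (i, false), x p + x (i, false)
            = ∑ p : S × Bool, x p := Finset.sum_erase_add _ _ (Finset.mem_univ _)
        push_cast at h
        linarith
      have hnode : ∀ i : S, x (i, true) + ∑ j ∈ univ.erase i, x (j, false) ≤ 0 := by
        intro i
        have he : ∑ j ∈ (univ : Finset S).erase i, x (j, false) + x (i, false)
            = ∑ j : S, x (j, false) := Finset.sum_erase_add _ _ (Finset.mem_univ _)
        have h1 := hple i
        have h2' := hnge i
        linarith
      exact ⟨hsum0, hsp, hsn, hnode, fun i => ⟨hpge i, hple i⟩, fun i => ⟨hnge i, hnle i⟩⟩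
    · rintro ⟨h0, hsp, hsn, _, hxp, hxn⟩
      refine ⟨by rw [hrho_univ]; exact h0, ?_⟩
      intro X
      rw [sum_split, rho_eval, Int.cast_add, mul_add]
      exact add_le_add (sum_true_le hc x hxp hsp _) (sum_false_le hc x hxn hsn _)
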